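/- arXiv:1603.03986 — 3 statements merged into one kernel-verified Lean document; each statement's English description precedes it below -/
import Mathlib

section
/- Let x and t be real numbers with 1 - 2tx + t² > 0 and x ≠ t. Then 15·F(t,x)⁷ = 3·F^{(1)}(t,x)/(x-t)⁵ + 3·F^{(2)}(t,x)/(x-t)⁴ + F^{(3)}(t,x)/(x-t)³. -/
/-!
Writing `F = u ^ (-1/2)` with `u s = 1 - 2 s x + s²`, one has `F' = (x - s) F³`, so every
derivative of `F` is a polynomial in `x - s` and `F`:
`F'' = -F³ + 3 (x - s)² F⁵` and `F''' = -9 (x - s) F⁵ + 15 (x - s)³ F⁷`.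
Substituting, the `F³` and `F⁵` terms cancel and only `15 F⁷` survives.
-/

open Filter

theorem iteratedDeriv_succ_eq_of_hasDerivAt {f f' : ℝ → ℝ} {U : Set ℝ} (hU : IsOpen U)
    (hf : ∀ s ∈ U, HasDerivAt f (f' s) s) {t : ℝ} (ht : t ∈ U) (n : ℕ) :
    iteratedDeriv (n + 1) f t = iteratedDeriv n f' t := by
  rw [iteratedDeriv_succ']
  exact Filter.EventuallyEq.iteratedDeriv_eq n
    (eventually_of_mem (hU.mem_nhds ht) fun s hs => (hf s hs).deriv)

noncomputable def legendreGenFun (x s : ℝ) : ℝ := (1 - 2 * s * x + s ^ 2) ^ (-(1 : ℝ) / 2)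

section

variable {x s : ℝ}

theorem isOpen_legendreGenFun_domain (x : ℝ) : IsOpen {s : ℝ | 0 < 1 - 2 * s * x + s ^ 2} :=
  isOpen_lt continuous_const (by fun_prop)

theorem hasDerivAt_legendreGenFun (hs : 0 < 1 - 2 * s * x + s ^ 2) :
    HasDerivAt (legendreGenFun x) ((x - s) * legendreGenFun x s ^ 3) s := by
  have hu : HasDerivAt (fun s : ℝ => 1 - 2 * s * x + s ^ 2) (2 * s - 2 * x) s := by
    have := (((hasDerivAt_id' s).mul_const (2 * x)).const_sub 1).add (hasDerivAt_pow 2 s)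
    exact (this.congr_deriv (by push_cast; ring)).congr_of_eventuallyEq
      (.of_forall fun y => by simp only [Pi.add_apply]; ring)
  have hcube : (1 - 2 * s * x + s ^ 2) ^ (-(1 : ℝ) / 2 - 1) = legendreGenFun x s ^ 3 := by
    rw [legendreGenFun, ← Real.rpow_mul_natCast hs.le]
    norm_num
  refine (hu.rpow_const (p := -(1 : ℝ) / 2) (Or.inl hs.ne')).congr_deriv ?_
  rw [hcube]
  ring

theorem hasDerivAt_iteratedDeriv_one_legendreGenFun (hs : 0 < 1 - 2 * s * x + s ^ 2) :
    HasDerivAt (fun s => (x - s) * legendreGenFun x s ^ 3)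
      (-legendreGenFun x s ^ 3 + 3 * (x - s) ^ 2 * legendreGenFun x s ^ 5) s := by
  refine (((hasDerivAt_id' s).const_sub x).mul
    ((hasDerivAt_legendreGenFun hs).pow 3)).congr_deriv ?_
  simp only [Pi.pow_apply]
  push_cast
  ring

theorem hasDerivAt_iteratedDeriv_two_legendreGenFun (hs : 0 < 1 - 2 * s * x + s ^ 2) :
    HasDerivAt (fun s => -legendreGenFun x s ^ 3 + 3 * (x - s) ^ 2 * legendreGenFun x s ^ 5)
      (-9 * (x - s) * legendreGenFun x s ^ 5 + 15 * (x - s) ^ 3 * legendreGenFun x s ^ 7) s := by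
  have hF := hasDerivAt_legendreGenFun hs
  refine ((hF.pow 3).neg.add
    ((((hasDerivAt_id' s).const_sub x).pow 2).const_mul 3 |>.mul (hF.pow 5))).congr_deriv ?_
  simp only [Pi.pow_apply]
  push_cast
  ring

theorem iteratedDeriv_one_legendreGenFun (hs : 0 < 1 - 2 * s * x + s ^ 2) :
    iteratedDeriv 1 (legendreGenFun x) s = (x - s) * legendreGenFun x s ^ 3 := by
  rw [iteratedDeriv_one, (hasDerivAt_legendreGenFun hs).deriv]

theorem iteratedDeriv_two_legendreGenFun (hs : 0 < 1 - 2 * s * x + s ^ 2) :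
    iteratedDeriv 2 (legendreGenFun x) s
      = -legendreGenFun x s ^ 3 + 3 * (x - s) ^ 2 * legendreGenFun x s ^ 5 := by
  rw [iteratedDeriv_succ_eq_of_hasDerivAt (isOpen_legendreGenFun_domain x)
      (fun _ => hasDerivAt_legendreGenFun) hs,
    iteratedDeriv_one, (hasDerivAt_iteratedDeriv_one_legendreGenFun hs).deriv]

theorem iteratedDeriv_three_legendreGenFun (hs : 0 < 1 - 2 * s * x + s ^ 2) :
    iteratedDeriv 3 (legendreGenFun x) s
      = -9 * (x - s) * legendreGenFun x s ^ 5 + 15 * (x - s) ^ 3 * legendreGenFun x s ^ 7 := by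
  rw [iteratedDeriv_succ_eq_of_hasDerivAt (isOpen_legendreGenFun_domain x)
      (fun _ => hasDerivAt_legendreGenFun) hs,
    iteratedDeriv_succ_eq_of_hasDerivAt (isOpen_legendreGenFun_domain x)
      (fun _ => hasDerivAt_iteratedDeriv_one_legendreGenFun) hs,
    iteratedDeriv_one, (hasDerivAt_iteratedDeriv_two_legendreGenFun hs).deriv]

end

/-- For real `x` and `t` with `1 - 2tx + t² > 0` and `x ≠ t`, the function
`F(t,x) = (1 - 2tx + t²)^(-1/2)` satisfies
`15·F⁷ = 3·F⁽¹⁾/(x-t)⁵ + 3·F⁽²⁾/(x-t)⁴ + F⁽³⁾/(x-t)³`. -/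
theorem legendre_genFun_pow_seven (x t : ℝ) (h : 1 - 2 * t * x + t ^ 2 > 0) (hxt : x ≠ t) :
    15 * ((1 - 2 * t * x + t ^ 2) ^ (-(1 : ℝ) / 2)) ^ 7
      = 3 * iteratedDeriv 1 (fun s : ℝ => (1 - 2 * s * x + s ^ 2) ^ (-(1 : ℝ) / 2)) t / (x - t) ^ 5
        + 3 * iteratedDeriv 2 (fun s : ℝ => (1 - 2 * s * x + s ^ 2) ^ (-(1 : ℝ) / 2)) t / (x - t) ^ 4
        + iteratedDeriv 3 (fun s : ℝ => (1 - 2 * s * x + s ^ 2) ^ (-(1 : ℝ) / 2)) t / (x - t) ^ 3 := by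
  change 15 * legendreGenFun x t ^ 7
    = 3 * iteratedDeriv 1 (legendreGenFun x) t / (x - t) ^ 5
      + 3 * iteratedDeriv 2 (legendreGenFun x) t / (x - t) ^ 4
      + iteratedDeriv 3 (legendreGenFun x) t / (x - t) ^ 3
  rw [iteratedDeriv_one_legendreGenFun h, iteratedDeriv_two_legendreGenFun h,
    iteratedDeriv_three_legendreGenFun h]
  have hxt' : x - t ≠ 0 := sub_ne_zero.mpr hxt
  field_simp
  ring
end

section
/- Let x and t be real numbers with 1 - 2tx + t² > 0 and x ≠ t. Then 15·F(t,x)⁴·F^{(1)}(t,x) = 3·F^{(1)}(t,x)/(x-t)⁴ + 3·F^{(2)}(t,x)/(x-t)³ + F^{(3)}(t,x)/(x-t)². -/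
/-!
Write `d = x - s`. Since `(1 - 2sx + s²)' = -2d`, the chain rule gives `F' = d F³`, and this
first-order equation alone yields `F'' = -F³ + 3d²F⁵` and `F''' = -9dF⁵ + 15d³F⁷`. Substituting,
the right-hand side telescopes to `15dF⁷ = 15F⁴F'`.
-/

open Set Filter

theorem iteratedDeriv_succ_eqOn {𝕜 E : Type*} [NontriviallyNormedField 𝕜] [NormedAddCommGroup E]
    [NormedSpace 𝕜 E] {f g g' : 𝕜 → E} {U : Set 𝕜} {n : ℕ} (hU : IsOpen U)
    (hfg : EqOn (iteratedDeriv n f) g U) (hg : ∀ s ∈ U, HasDerivAt g (g' s) s) :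
    EqOn (iteratedDeriv (n + 1) f) g' U := fun s hs => by
  rw [iteratedDeriv_succ]
  exact ((hg s hs).congr_of_eventuallyEq (eventuallyEq_of_mem (hU.mem_nhds hs) hfg)).deriv

theorem hasDerivAt_legendre_genFun {x s : ℝ} (hs : 0 < 1 - 2 * s * x + s ^ 2) :
    HasDerivAt (fun r : ℝ => (1 - 2 * r * x + r ^ 2) ^ (-(1 : ℝ) / 2))
      ((x - s) * ((1 - 2 * s * x + s ^ 2) ^ (-(1 : ℝ) / 2)) ^ 3) s := by
  have hu : HasDerivAt (fun r : ℝ => 1 - 2 * r * x + r ^ 2) (-2 * (x - s)) s := by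
    refine (((hasDerivAt_id s).const_mul 2 |>.mul_const x |>.const_sub 1).add
      (hasDerivAt_pow 2 s)).congr_deriv ?_
    push_cast; ring
  have hcube : (1 - 2 * s * x + s ^ 2) ^ (-(1 : ℝ) / 2 - 1)
      = ((1 - 2 * s * x + s ^ 2) ^ (-(1 : ℝ) / 2)) ^ 3 := by
    rw [← Real.rpow_natCast _ 3, ← Real.rpow_mul hs.le]; norm_num
  convert hu.rpow_const (p := -(1 : ℝ) / 2) (Or.inl hs.ne') using 1
  rw [hcube]; ring

section LegendreODE

variable {F : ℝ → ℝ} {x s : ℝ}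

theorem hasDerivAt_sub_mul_pow_three (hF : HasDerivAt F ((x - s) * F s ^ 3) s) :
    HasDerivAt (fun r => (x - r) * F r ^ 3) (-F s ^ 3 + 3 * (x - s) ^ 2 * F s ^ 5) s := by
  refine (((hasDerivAt_id s).const_sub x).mul (hF.pow 3)).congr_deriv ?_
  simp only [id, Pi.pow_apply]; ring

theorem hasDerivAt_second_deriv_legendre (hF : HasDerivAt F ((x - s) * F s ^ 3) s) :
    HasDerivAt (fun r => -F r ^ 3 + 3 * (x - r) ^ 2 * F r ^ 5)
      (-9 * (x - s) * F s ^ 5 + 15 * (x - s) ^ 3 * F s ^ 7) s := by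
  refine ((hF.pow 3).neg.add ((((hasDerivAt_id s).const_sub x).pow 2).const_mul 3 |>.mul
    (hF.pow 5))).congr_deriv ?_
  simp only [id, Pi.pow_apply]; ring

end LegendreODE

-- At `d = 0` both sides vanish, the right-hand side through the convention `a / 0 = 0`.
theorem legendre_telescope {K : Type*} [Field K] (d F : K) :
    15 * F ^ 4 * (d * F ^ 3)
      = 3 * (d * F ^ 3) / d ^ 4 + 3 * (-F ^ 3 + 3 * d ^ 2 * F ^ 5) / d ^ 3
        + (-9 * d * F ^ 5 + 15 * d ^ 3 * F ^ 7) / d ^ 2 := by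
  rcases eq_or_ne d 0 with rfl | hd
  · simp
  · field_simp
    ring

theorem legendre_genFun_pow_four_mul_deriv_general (x t : ℝ) (h : 1 - 2 * t * x + t ^ 2 > 0) :
    15 * ((1 - 2 * t * x + t ^ 2) ^ (-(1 : ℝ) / 2)) ^ 4
        * iteratedDeriv 1 (fun s : ℝ => (1 - 2 * s * x + s ^ 2) ^ (-(1 : ℝ) / 2)) t
      = 3 * iteratedDeriv 1 (fun s : ℝ => (1 - 2 * s * x + s ^ 2) ^ (-(1 : ℝ) / 2)) t / (x - t) ^ 4
        + 3 * iteratedDeriv 2 (fun s : ℝ => (1 - 2 * s * x + s ^ 2) ^ (-(1 : ℝ) / 2)) t / (x - t) ^ 3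
        + iteratedDeriv 3 (fun s : ℝ => (1 - 2 * s * x + s ^ 2) ^ (-(1 : ℝ) / 2)) t / (x - t) ^ 2 := by
  set F := fun s : ℝ => (1 - 2 * s * x + s ^ 2) ^ (-(1 : ℝ) / 2)
  set U := {s : ℝ | 0 < 1 - 2 * s * x + s ^ 2}
  have hU : IsOpen U := isOpen_lt continuous_const (by fun_prop)
  have hF : ∀ s ∈ U, HasDerivAt F ((x - s) * F s ^ 3) s := fun s hs =>
    hasDerivAt_legendre_genFun hs
  have h1 := iteratedDeriv_succ_eqOn (n := 0) (g' := fun s => (x - s) * F s ^ 3) hU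
    (fun s _ => congrFun iteratedDeriv_zero s) hF
  have h2 := iteratedDeriv_succ_eqOn hU h1 fun s hs => hasDerivAt_sub_mul_pow_three (hF s hs)
  have h3 := iteratedDeriv_succ_eqOn hU h2 fun s hs => hasDerivAt_second_deriv_legendre (hF s hs)
  rw [h1 h, h2 h, h3 h]
  exact legendre_telescope (x - t) (F t)

/-- For real `x` and `t` with `1 - 2tx + t² > 0` and `x ≠ t`, the function
`F(t,x) = (1 - 2tx + t²)^(-1/2)` satisfies
`15·F⁴·F⁽¹⁾ = 3·F⁽¹⁾/(x-t)⁴ + 3·F⁽²⁾/(x-t)³ + F⁽³⁾/(x-t)²`. -/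
theorem legendre_genFun_pow_four_mul_deriv (x t : ℝ) (h : 1 - 2 * t * x + t ^ 2 > 0)
    (hxt : x ≠ t) :
    15 * ((1 - 2 * t * x + t ^ 2) ^ (-(1 : ℝ) / 2)) ^ 4
        * iteratedDeriv 1 (fun s : ℝ => (1 - 2 * s * x + s ^ 2) ^ (-(1 : ℝ) / 2)) t
      = 3 * iteratedDeriv 1 (fun s : ℝ => (1 - 2 * s * x + s ^ 2) ^ (-(1 : ℝ) / 2)) t / (x - t) ^ 4
        + 3 * iteratedDeriv 2 (fun s : ℝ => (1 - 2 * s * x + s ^ 2) ^ (-(1 : ℝ) / 2)) t / (x - t) ^ 3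
        + iteratedDeriv 3 (fun s : ℝ => (1 - 2 * s * x + s ^ 2) ^ (-(1 : ℝ) / 2)) t / (x - t) ^ 2 :=
  legendre_genFun_pow_four_mul_deriv_general x t h
end

section
/- (Closed form for a_2.) For every integer N ≥ 2, a_2(N+1) = 2^{N-1}·(N-1)! + Σ_{l=0}^{N-2} ⟨2N-2⟩_l · (2N-2l-3)!!. -/
/-!
Writing `n = N - 1`, the extra term `2^n n!` equals `⟨2n⟩_n · (-1)!!`, so the claim reads
`a_2(n+2) = U(n) := Σ_{l=0}^{n} ⟨2n⟩_l (2n-2l-1)!!` (in `ℕ` the last index is `2n - 2n - 1 = 0`,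
and `0‼ = 1`). Splitting off the `l = 0` term gives `U(n+1) = (2n+2) U(n) + (2n+1)!!`, which is
the recursion of `a_2` once one knows `a_1(n+2) = (2n+1)!!`.
-/

/-- The coefficients `a_i(N)` defined by `a_1(1) = 1`, `a_1(N+1) = (2N-1)·a_1(N)`,
`a_{N+1}(N+1) = a_N(N)`, and `a_i(N+1) = (2N-i)·a_i(N) + a_{i-1}(N)` for `2 ≤ i ≤ N`
(and `a_i(N) = 0` when `i = 0` or `i > N`). -/
def legA : ℕ → ℕ → ℤ
  | _, 0 => 0
  | i, 1 => if i = 1 then 1 else 0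
  | i, (N + 2) => if i = 0 ∨ N + 2 < i then 0
      else (2 * (N + 1) - (i : ℤ)) * legA i (N + 1) + legA (i - 1) (N + 1)

/-- `⟨m⟩_l = m(m-2)(m-4)···(m-2(l-1))`, with `⟨m⟩_0 = 1`. -/
def descDouble (m : ℤ) (l : ℕ) : ℤ := ∏ j ∈ Finset.range l, (m - 2 * j)

open Finset

lemma descDouble_succ (m : ℤ) (l : ℕ) :
    descDouble m (l + 1) = m * descDouble (m - 2) l := by
  rw [descDouble, prod_range_succ', mul_comm, descDouble]
  simp only [Nat.cast_zero, mul_zero, sub_zero]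
  congr 1
  exact prod_congr rfl fun j _ => by push_cast; ring

lemma descDouble_two_mul_self (n : ℕ) : descDouble (2 * n) n = 2 ^ n * n.factorial := by
  induction n with
  | zero => simp [descDouble]
  | succ n ih =>
    rw [descDouble_succ, show (2 * ((n + 1 : ℕ) : ℤ) - 2) = 2 * n by push_cast; ring, ih,
      Nat.factorial_succ]
    push_cast
    ring

lemma legA_zero (N : ℕ) : legA 0 N = 0 := by
  match N with
  | 0 => rfl
  | 1 => rfl
  | N + 2 => rw [legA, if_pos (Or.inl rfl)]

lemma legA_succ_succ {i : ℕ} (N : ℕ) (hi : 1 ≤ i) (hiN : i ≤ N + 2) :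
    legA i (N + 2) = (2 * (N + 1) - (i : ℤ)) * legA i (N + 1) + legA (i - 1) (N + 1) := by
  rw [legA, if_neg (by omega)]

lemma legA_one (n : ℕ) : legA 1 (n + 2) = (2 * n + 1).doubleFactorial := by
  induction n with
  | zero => rfl
  | succ n ih =>
    rw [legA_succ_succ _ le_rfl (by omega), ih, Nat.sub_self, legA_zero,
      show 2 * (n + 1) + 1 = 2 * n + 1 + 2 by ring, Nat.doubleFactorial_add_two]
    push_cast
    ring

lemma sum_descDouble_mul_doubleFactorial_succ (n : ℕ) :
    ∑ l ∈ range (n + 2), descDouble (2 * (n + 1 : ℕ)) l * (2 * (n + 1) - 2 * l - 1).doubleFactorial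
      = 2 * (n + 1) * ∑ l ∈ range (n + 1),
          descDouble (2 * n) l * (2 * n - 2 * l - 1).doubleFactorial
        + (2 * n + 1).doubleFactorial := by
  rw [sum_range_succ', mul_sum]
  congr 1
  · refine sum_congr rfl fun l _ => ?_
    rw [descDouble_succ, show (2 * ((n + 1 : ℕ) : ℤ) - 2) = 2 * n by push_cast; ring,
      show 2 * (n + 1) - 2 * (l + 1) - 1 = 2 * n - 2 * l - 1 by omega]
    push_cast
    ring
  · simp [descDouble, show 2 * (n + 1) - 1 = 2 * n + 1 by omega]

lemma legA_two_eq_sum (n : ℕ) :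
    legA 2 (n + 2)
      = ∑ l ∈ range (n + 1), descDouble (2 * n) l * (2 * n - 2 * l - 1).doubleFactorial := by
  induction n with
  | zero => rfl
  | succ n ih =>
    rw [legA_succ_succ _ (by omega) (by omega), ih, legA_one,
      sum_descDouble_mul_doubleFactorial_succ]
    push_cast
    ring

/-- Closed form for `a_2`: for `N ≥ 2`,
`a_2(N+1) = 2^(N-1)·(N-1)! + Σ_{l=0}^{N-2} ⟨2N-2⟩_l · (2N-2l-3)!!`. -/
theorem legA_two (N : ℕ) (hN : 2 ≤ N) :
    legA 2 (N + 1)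
      = 2 ^ (N - 1) * (Nat.factorial (N - 1) : ℤ)
        + ∑ l ∈ Finset.range (N - 1),
            descDouble ((2 * N : ℤ) - 2) l * (Nat.doubleFactorial (2 * N - 2 * l - 3) : ℤ) := by
  obtain ⟨n, rfl⟩ : ∃ n, N = n + 1 := ⟨N - 1, by omega⟩
  rw [legA_two_eq_sum, sum_range_succ, Nat.sub_self, Nat.zero_sub, descDouble_two_mul_self,
    Nat.add_sub_cancel, show (2 * ((n + 1 : ℕ) : ℤ) - 2) = 2 * n by push_cast; ring, add_comm]
  congr 1
  · simp
  · exact sum_congr rfl fun l hl => by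
      rw [show 2 * (n + 1) - 2 * l - 3 = 2 * n - 2 * l - 1 by simp at hl; omega]
end
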